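/- Let A be an n×n real symmetric matrix with zero diagonal (the adjacency matrix of a weighted graph), and let u, v, x be three distinct indices such that u and v are pendent vertices attached to x: A_{u,x} = a ≠ 0 and A_{u,y} = 0 for all y ≠ x, and A_{v,x} = b ≠ 0 and A_{v,y} = 0 for all y ≠ x. If |a| ≠ |b|, then u or v is sedentary: inf_{t>0} |exp(itA)_{u,u}| > 0 or inf_{t>0} |exp(itA)_{v,v}| > 0. -/

import Mathlib

/-!
If `u` and `v` hang off the same vertex `x` with weights `a = A u x` and `b = A v x`, then
`b e_u - a e_v` lies in the kernel of `A`, hence is fixed by `U(t) = exp(itA)`. Reading off the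
`u`-th coordinate gives `a U_uv = b (U_uu - 1)`, while unitarity of `U(t)` gives
`|U_uu|² + |U_uv|² ≤ 1`. Together with `|U_uu - 1| ≥ 1 - |U_uu|` this forces
`|U_uu| ≥ (b² - a²)/(a² + b²)` for all `t`, which is positive as soon as `|a| < |b|`.
-/

open Matrix
open scoped Kronecker

/-- Transition matrix `U(t) = exp(itA)` of the continuous-time quantum walk on the
weighted graph with real symmetric adjacency matrix `A`. -/
noncomputable def transition {m : Type*} [Fintype m] [DecidableEq m]
    (A : Matrix m m ℝ) (t : ℝ) : Matrix m m ℂ :=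
  NormedSpace.exp ((Complex.I * t) • A.map (fun x : ℝ => (x : ℂ)))

/-- A vertex `u` is sedentary if `inf_{t>0} |U(t)_{u,u}| > 0`. -/
noncomputable def Sedentary {m : Type*} [Fintype m] [DecidableEq m]
    (A : Matrix m m ℝ) (u : m) : Prop :=
  0 < ⨅ t : {t : ℝ // 0 < t}, ‖transition A t u u‖

/-- `E` is the orthogonal spectral projection of `A` for the eigenvalue `θ`:
`E` is real symmetric, idempotent, and for every vector `v`, `A·v = θ·v ↔ E·v = v`. -/
def IsSpectralProj {m : Type*} [Fintype m] [DecidableEq m]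
    (A : Matrix m m ℝ) (θ : ℝ) (E : Matrix m m ℝ) : Prop :=
  E.IsSymm ∧ E * E = E ∧ ∀ v : m → ℝ, A.mulVec v = θ • v ↔ E.mulVec v = v

open NormedSpace in
theorem Matrix.exp_mulVec_of_mulVec_eq_zero {m 𝔸 : Type*} [Fintype m] [DecidableEq m]
    [NormedRing 𝔸] [NormedAlgebra ℚ 𝔸] [CompleteSpace 𝔸] {N : Matrix m m 𝔸} {w : m → 𝔸}
    (h : N *ᵥ w = 0) : exp N *ᵥ w = w := by
  let normedRing : NormedRing (Matrix m m 𝔸) := Matrix.linftyOpNormedRing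
  let _ : NormedAlgebra ℚ (Matrix m m 𝔸) := Matrix.linftyOpNormedAlgebra
  -- the operator norm induces the product uniformity, so completeness carries over
  have : @CompleteSpace (Matrix m m 𝔸) normedRing.toPseudoMetricSpace.toUniformSpace :=
    (inferInstance : CompleteSpace (m → m → 𝔸))
  -- with `W` the matrix whose columns all equal `w`, `N *ᵥ w = 0` reads `W * 0 = N * W`
  have hW : SemiconjBy (replicateCol m w) 0 N := by
    rw [SemiconjBy, mul_zero, ← replicateCol_mulVec, h, replicateCol_zero]
  have hexp := hW.exp_right
  rw [SemiconjBy, exp_zero, mul_one, ← replicateCol_mulVec] at hexp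
  exact funext fun i => (congr_fun (congr_fun hexp i) i).symm

theorem Matrix.sum_norm_sq_row_eq_one_of_mem_unitaryGroup {m 𝕜 : Type*} [Fintype m]
    [DecidableEq m] [RCLike 𝕜] {U : Matrix m m 𝕜} (hU : U ∈ unitaryGroup m 𝕜) (i : m) :
    ∑ j, ‖U i j‖ ^ 2 = 1 := by
  have hUU : U * Uᴴ = 1 := Unitary.mul_star_self_of_mem hU
  have h := congr_fun (congr_fun hUU i) i
  simp only [mul_apply, conjTranspose_apply, ← starRingEnd_apply, RCLike.mul_conj,
    one_apply_eq] at h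
  exact_mod_cast h

theorem Matrix.norm_sq_add_norm_sq_le_one_of_mem_unitaryGroup {m 𝕜 : Type*} [Fintype m]
    [DecidableEq m] [RCLike 𝕜] {U : Matrix m m 𝕜} (hU : U ∈ unitaryGroup m 𝕜) {i j k : m}
    (hjk : j ≠ k) : ‖U i j‖ ^ 2 + ‖U i k‖ ^ 2 ≤ 1 := by
  have hpair := Finset.sum_le_sum_of_subset_of_nonneg (Finset.subset_univ {j, k})
    fun l _ _ => sq_nonneg ‖U i l‖
  rwa [Finset.sum_pair hjk, sum_norm_sq_row_eq_one_of_mem_unitaryGroup hU i] at hpair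

theorem Matrix.IsSymm.mulVec_pendent_eq_zero {R m : Type*} [CommRing R] [Fintype m]
    [DecidableEq m] {A : Matrix m m R} (hA : A.IsSymm) {u v x : m}
    (hu : ∀ y, y ≠ x → A u y = 0) (hv : ∀ y, y ≠ x → A v y = 0) :
    A *ᵥ (Pi.single u (A v x) - Pi.single v (A u x)) = 0 := by
  ext i
  simp only [mulVec_sub, mulVec_single, Pi.sub_apply, Pi.zero_apply, Pi.smul_apply, col_apply,
    op_smul_eq_mul]
  rw [hA.apply u i, hA.apply v i]
  rcases eq_or_ne i x with rfl | hi
  · ring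
  · rw [hu i hi, hv i hi, zero_mul, zero_mul, sub_zero]

theorem le_norm_of_mul_eq_mul_sub_one {s q : ℂ} {a b : ℝ} (hlin : a * q = b * (s - 1))
    (hnorm : ‖s‖ ^ 2 + ‖q‖ ^ 2 ≤ 1) (hab : |a| < |b|) :
    (b ^ 2 - a ^ 2) / (a ^ 2 + b ^ 2) ≤ ‖s‖ := by
  have hsq : a ^ 2 < b ^ 2 := sq_lt_sq.mpr hab
  have hnorms : a ^ 2 * ‖q‖ ^ 2 = b ^ 2 * ‖s - 1‖ ^ 2 := by
    have h := congrArg (‖·‖ ^ 2) hlin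
    simp only [norm_mul, Complex.norm_real, Real.norm_eq_abs, mul_pow, sq_abs] at h
    exact h
  rw [div_le_iff₀ (by linarith [sq_nonneg a])]
  rcases le_or_gt 1 ‖s‖ with hs | hs
  · nlinarith
  have htri : 1 - ‖s‖ ≤ ‖s - 1‖ := by
    simpa [norm_sub_rev] using norm_sub_norm_le (1 : ℂ) s
  have hsq' : b ^ 2 * (1 - ‖s‖) ^ 2 ≤ a ^ 2 * ((1 - ‖s‖) * (1 + ‖s‖)) := calc
    b ^ 2 * (1 - ‖s‖) ^ 2 ≤ b ^ 2 * ‖s - 1‖ ^ 2 := by gcongr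
    _ = a ^ 2 * ‖q‖ ^ 2 := hnorms.symm
    _ ≤ a ^ 2 * ((1 - ‖s‖) * (1 + ‖s‖)) := by gcongr; nlinarith
  have hdiv : b ^ 2 * (1 - ‖s‖) ≤ a ^ 2 * (1 + ‖s‖) :=
    le_of_mul_le_mul_right (by linear_combination hsq') (by linarith : 0 < 1 - ‖s‖)
  linarith

theorem transition_mem_unitaryGroup {m : Type*} [Fintype m] [DecidableEq m]
    {A : Matrix m m ℝ} (hA : A.IsSymm) (t : ℝ) : transition A t ∈ unitaryGroup m ℂ := by
  set M := (Complex.I * t) • A.map (fun x : ℝ => (x : ℂ))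
  have hMskew : Mᴴ = -M := by
    have hAH : (A.map (fun x : ℝ => (x : ℂ))).IsHermitian :=
      (isHermitian_iff_isSymm.mpr hA).map _ fun _ => (Complex.conj_ofReal _).symm
    rw [conjTranspose_smul, hAH.eq, ← neg_smul]
    simp
  rw [mem_unitaryGroup_iff, star_eq_conjTranspose, transition, ← exp_conjTranspose, hMskew,
    ← exp_add_of_commute _ _ (Commute.refl M).neg_right, add_neg_cancel, NormedSpace.exp_zero]

theorem transition_apply_self_ge_of_pendent {m : Type*} [Fintype m] [DecidableEq m]
    {A : Matrix m m ℝ} (hA : A.IsSymm) {u v x : m} (huv : u ≠ v)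
    (hu : ∀ y, y ≠ x → A u y = 0) (hv : ∀ y, y ≠ x → A v y = 0) (hlt : |A u x| < |A v x|)
    (t : ℝ) : (A v x ^ 2 - A u x ^ 2) / (A u x ^ 2 + A v x ^ 2) ≤ ‖transition A t u u‖ := by
  set Aℂ := A.map (fun r : ℝ => (r : ℂ))
  set w : m → ℂ := Pi.single u (A v x : ℂ) - Pi.single v (A u x : ℂ)
  have hker : Aℂ *ᵥ w = 0 :=
    (hA.map _).mulVec_pendent_eq_zero (fun y hy => by simp [hu y hy])
      (fun y hy => by simp [hv y hy])
  have hfix : transition A t *ᵥ w = w :=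
    exp_mulVec_of_mulVec_eq_zero (by rw [smul_mulVec, hker, smul_zero])
  have hrow : A v x * transition A t u u - A u x * transition A t u v = A v x := by
    simpa [w, mulVec_sub, mulVec_single, huv] using congr_fun hfix u
  exact le_norm_of_mul_eq_mul_sub_one (q := transition A t u v) (by linear_combination -hrow)
    (norm_sq_add_norm_sq_le_one_of_mem_unitaryGroup (transition_mem_unitaryGroup hA t) huv) hlt

theorem sedentary_of_forall_le {m : Type*} [Fintype m] [DecidableEq m] {A : Matrix m m ℝ}
    {u : m} {c : ℝ} (hc : 0 < c) (h : ∀ t, 0 < t → c ≤ ‖transition A t u u‖) :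
    Sedentary A u :=
  have : Nonempty {t : ℝ // 0 < t} := ⟨⟨1, one_pos⟩⟩
  hc.trans_le (le_ciInf fun t => h t t.2)

theorem sedentary_of_pendent_of_abs_lt {m : Type*} [Fintype m] [DecidableEq m]
    {A : Matrix m m ℝ} (hA : A.IsSymm) {u v x : m} (huv : u ≠ v)
    (hu : ∀ y, y ≠ x → A u y = 0) (hv : ∀ y, y ≠ x → A v y = 0) (hlt : |A u x| < |A v x|) :
    Sedentary A u := by
  have hsq : A u x ^ 2 < A v x ^ 2 := sq_lt_sq.mpr hlt
  have hc : 0 < (A v x ^ 2 - A u x ^ 2) / (A u x ^ 2 + A v x ^ 2) :=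
    div_pos (by linarith) (by linarith [sq_nonneg (A u x)])
  exact sedentary_of_forall_le hc fun t _ => transition_apply_self_ge_of_pendent hA huv hu hv hlt t

theorem stmt11_general {n : ℕ} (A : Matrix (Fin n) (Fin n) ℝ) (hA : A.IsSymm)
    (u v x : Fin n) (huv : u ≠ v)
    (a b : ℝ)
    (hAux : A u x = a) (hupend : ∀ y : Fin n, y ≠ x → A u y = 0)
    (hAvx : A v x = b) (hvpend : ∀ y : Fin n, y ≠ x → A v y = 0)
    (hab : |a| ≠ |b|) :
    Sedentary A u ∨ Sedentary A v := by
  subst hAux hAvx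
  rcases hab.lt_or_gt with hlt | hgt
  · exact .inl (sedentary_of_pendent_of_abs_lt hA huv hupend hvpend hlt)
  · exact .inr (sedentary_of_pendent_of_abs_lt hA huv.symm hvpend hupend hgt)

/-- if `u` and `v` are pendent vertices, both attached to `x`, whose pendent
edge weights `a`, `b` satisfy `|a| ≠ |b|`, then `u` or `v` is sedentary. -/
theorem stmt11 {n : ℕ} (A : Matrix (Fin n) (Fin n) ℝ) (hA : A.IsSymm)
    (hdiag : ∀ i : Fin n, A i i = 0)
    (u v x : Fin n) (huv : u ≠ v) (hux : u ≠ x) (hvx : v ≠ x)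
    (a b : ℝ) (ha : a ≠ 0) (hb : b ≠ 0)
    (hAux : A u x = a) (hupend : ∀ y : Fin n, y ≠ x → A u y = 0)
    (hAvx : A v x = b) (hvpend : ∀ y : Fin n, y ≠ x → A v y = 0)
    (hab : |a| ≠ |b|) :
    Sedentary A u ∨ Sedentary A v :=
  stmt11_general A hA u v x huv a b hAux hupend hAvx hvpend hab
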